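/- arXiv:1908.03551 — 2 statements merged into one kernel-verified Lean document; each statement's English description precedes it below -/
import Mathlib

section
/- For all words u, v, z over Σ: z ∈ u ·^I v if and only if u ⊲ z ⊳ v. -/
open RegularExpression
open scoped Classical

universe u

variable {α : Type u}

/-- Two words are independent if every letter of the first is independent
of every letter of the second. -/
def WIndep (I : α → α → Prop) (u v : List α) : Prop :=
  ∀ a ∈ u, ∀ b ∈ v, I a b

/-- Trace equivalence: the least equivalence relation on words containing
all pairs (x ++ [a,b] ++ y, x ++ [b,a] ++ y) with a I b. -/
inductive TrEq (I : α → α → Prop) : List α → List α → Prop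
  | swap (x y : List α) {a b : α} : I a b → TrEq I (x ++ [a, b] ++ y) (x ++ [b, a] ++ y)
  | refl (u : List α) : TrEq I u u
  | symm {u v : List α} : TrEq I u v → TrEq I v u
  | trans {u v w : List α} : TrEq I u v → TrEq I v w → TrEq I u w

/-- Trace closure of a language. -/
def TrClosure (I : α → α → Prop) (L : Set (List α)) : Set (List α) :=
  {w | ∃ z ∈ L, TrEq I w z}

/-- u ⊲ z ⊳ v with exactly n blocks of u: there are nonempty words u₁,…,uₙ and
words v₀,…,vₙ (with v₁,…,v_{n-1} nonempty) such that u = u₁⋯uₙ, v = v₀⋯vₙ,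
z = v₀u₁v₁⋯uₙvₙ and vⱼ I uᵢ whenever j < i. -/
def ScatN (I : α → α → Prop) (n : ℕ) (u z v : List α) : Prop :=
  ∃ us vs : ℕ → List α,
    (∀ i, 1 ≤ i → i ≤ n → us i ≠ []) ∧
    (∀ j, 1 ≤ j → j ≤ n - 1 → vs j ≠ []) ∧
    u = ((List.range n).map (fun i => us (i + 1))).flatten ∧
    v = ((List.range (n + 1)).map vs).flatten ∧
    z = vs 0 ++ ((List.range n).map (fun i => us (i + 1) ++ vs (i + 1))).flatten ∧
    (∀ i j, 1 ≤ i → i ≤ n → j < i → WIndep I (vs j) (us i))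

/-- u ⊲ z ⊳ v -/
def Scat (I : α → α → Prop) (u z v : List α) : Prop :=
  ∃ n, ScatN I n u z v

/-- u ∼⊲ z ⊳ v -/
def EqScat (I : α → α → Prop) (u z v : List α) : Prop :=
  ∃ u', TrEq I u u' ∧ Scat I u' z v

/-- u ∼⊲ z ⊳∼ v -/
def EqScatEq (I : α → α → Prop) (u z v : List α) : Prop :=
  ∃ u' v', TrEq I u u' ∧ Scat I u' z v' ∧ TrEq I v' v

/-- u ∼⊲_N z ⊳∼ v : as EqScatEq, with the number of blocks bounded by N -/
def EqScatEqLe (I : α → α → Prop) (N : ℕ) (u z v : List α) : Prop :=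
  ∃ u' v', TrEq I u u' ∧ (∃ n ≤ N, ScatN I n u' z v') ∧ TrEq I v' v

/-- Reordering concatenation of words. -/
def rconc (I : α → α → Prop) : List α → List α → Set (List α)
  | [], v => {v}
  | a :: u, [] => {a :: u}
  | a :: u, b :: v =>
      (List.cons a) '' rconc I u (b :: v) ∪
      {z | WIndep I (a :: u) [b] ∧ ∃ w ∈ rconc I (a :: u) v, z = b :: w}
termination_by u v => u.length + v.length

/-- Reordering concatenation lifted to languages. -/
def rconcL (I : α → α → Prop) (L L' : Set (List α)) : Set (List α) :=
  {z | ∃ u ∈ L, ∃ v ∈ L', z ∈ rconc I u v}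

/-- The reorderable part of a language w.r.t. a word. -/
def RPart (I : α → α → Prop) (u : List α) (L : Set (List α)) : Set (List α) :=
  {v ∈ L | WIndep I v u}

/-- The reordering derivative of a language along a word. -/
def RDeriv (I : α → α → Prop) (u : List α) (L : Set (List α)) : Set (List α) :=
  {v | ∃ z ∈ L, EqScat I u z v}

/-- Syntactic reorderable part of a regexp w.r.t. a letter. -/
noncomputable def Rexp (I : α → α → Prop) (a : α) : RegularExpression α → RegularExpression α
  | zero => zero
  | epsilon => epsilon
  | char b => if I a b then char b else zero
  | plus E F => plus (Rexp I a E) (Rexp I a F)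
  | comp E F => comp (Rexp I a E) (Rexp I a F)
  | RegularExpression.star E => star (Rexp I a E)

/-- Brzozowski reordering derivative of a regexp along a letter. -/
noncomputable def Dexp (I : α → α → Prop) (a : α) : RegularExpression α → RegularExpression α
  | zero => zero
  | epsilon => zero
  | char b => if a = b then epsilon else zero
  | plus E F => plus (Dexp I a E) (Dexp I a F)
  | comp E F => plus (comp (Dexp I a E) F) (comp (Rexp I a E) (Dexp I a F))
  | RegularExpression.star E => comp (star (Rexp I a E)) (comp (Dexp I a E) (star E))

/-- Syntactic reorderable part along a word. -/
noncomputable def RexpW (I : α → α → Prop) (u : List α) (E : RegularExpression α) :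
    RegularExpression α :=
  u.foldl (fun E a => Rexp I a E) E

/-- Brzozowski reordering derivative along a word. -/
noncomputable def DexpW (I : α → α → Prop) (u : List α) (E : RegularExpression α) :
    RegularExpression α :=
  u.foldl (fun E a => Dexp I a E) E

/-- Antimirov reordering parts-of-derivatives along a letter. -/
inductive Antim (I : α → α → Prop) : RegularExpression α → α → RegularExpression α → Prop
  | chr (a : α) : Antim I (char a) a epsilon
  | plusL {E F : RegularExpression α} {a E'} : Antim I E a E' → Antim I (plus E F) a E'
  | plusR {E F : RegularExpression α} {a F'} : Antim I F a F' → Antim I (plus E F) a F'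
  | compL {E F : RegularExpression α} {a E'} : Antim I E a E' → Antim I (comp E F) a (comp E' F)
  | compR {E F : RegularExpression α} {a F'} :
      Antim I F a F' → Antim I (comp E F) a (comp (Rexp I a E) F')
  | st {E : RegularExpression α} {a E'} :
      Antim I E a E' → Antim I (star E) a (comp (star (Rexp I a E)) (comp E' (star E)))

/-- Antimirov reordering parts-of-derivatives along a word. -/
inductive AntimW (I : α → α → Prop) : RegularExpression α → List α → RegularExpression α → Prop
  | nil (E : RegularExpression α) : AntimW I E [] E
  | snoc {E : RegularExpression α} {u E' a E''} :
      AntimW I E u E' → Antim I E' a E'' → AntimW I E (u ++ [a]) E''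

/-- The dependence graph of a word: vertices are positions; distinct positions
are adjacent when their letters are not independent. -/
def depGraph (I : α → α → Prop) (w : List α) : SimpleGraph (Fin w.length) where
  Adj i j := i ≠ j ∧ ¬(I (w.get i) (w.get j) ∧ I (w.get j) (w.get i))
  symm := by
    constructor
    intro i j h
    exact ⟨h.1.symm, fun hc => h.2 ⟨hc.2, hc.1⟩⟩
  loopless := by
    constructor
    intro i h
    exact h.1 rfl

/-- A word is connected if its dependence graph is connected. -/
def WordConnected (I : α → α → Prop) (w : List α) : Prop :=
  (depGraph I w).Preconnected

/-- Least fixed point star for the trace-closing semantics. -/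
def starI (I : α → α → Prop) (L : Set (List α)) : Set (List α) :=
  sInf {X | {([] : List α)} ∪ rconcL I L X ⊆ X}

/-- Trace-closing semantics of regular expressions. -/
def langI (I : α → α → Prop) : RegularExpression α → Set (List α)
  | zero => ∅
  | epsilon => {[]}
  | char a => {[a]}
  | plus E F => langI I E ∪ langI I F
  | comp E F => rconcL I (langI I E) (langI I F)
  | RegularExpression.star E => starI I (langI I E)

/-- L has (scattering) rank at most N. -/
def HasRankLe (I : α → α → Prop) (L : Set (List α)) (N : ℕ) : Prop :=
  ∀ u v, u ++ v ∈ TrClosure I L → ∃ z ∈ L, EqScatEqLe I N u z v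

/-- L has uniform (scattering) rank at most N. -/
def HasUniformRankLe (I : α → α → Prop) (L : Set (List α)) (N : ℕ) : Prop :=
  ∀ w ∈ TrClosure I L, ∃ z ∈ L, ∀ u v, w = u ++ v → EqScatEqLe I N u z v

/-- Star-connected regular expressions. -/
inductive StarConnected (I : α → α → Prop) : RegularExpression α → Prop
  | zero : StarConnected I zero
  | epsilon : StarConnected I epsilon
  | chr (a : α) : StarConnected I (char a)
  | plus {E F : RegularExpression α} :
      StarConnected I E → StarConnected I F → StarConnected I (plus E F)
  | comp {E F : RegularExpression α} :
      StarConnected I E → StarConnected I F → StarConnected I (comp E F)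
  | st {E : RegularExpression α} :
      StarConnected I E → (∀ w ∈ E.matches', WordConnected I w) → StarConnected I (star E)

/-- Refined Antimirov reordering parts-of-derivatives along a letter. -/
inductive RAntim (I : α → α → Prop) :
    RegularExpression α → α → RegularExpression α → RegularExpression α → Prop
  | chr (a : α) : RAntim I (char a) a epsilon epsilon
  | plusL {E F : RegularExpression α} {a El Er} :
      RAntim I E a El Er → RAntim I (plus E F) a El Er
  | plusR {E F : RegularExpression α} {a Fl Fr} :
      RAntim I F a Fl Fr → RAntim I (plus E F) a Fl Fr
  | compL {E F : RegularExpression α} {a El Er} :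
      RAntim I E a El Er → RAntim I (comp E F) a El (comp Er F)
  | compR {E F : RegularExpression α} {a Fl Fr} :
      RAntim I F a Fl Fr → RAntim I (comp E F) a (comp (Rexp I a E) Fl) Fr
  | st {E : RegularExpression α} {a El Er} :
      RAntim I E a El Er →
      RAntim I (star E) a (comp (star (Rexp I a E)) El) (comp Er (star E))

/-- Refined Antimirov relation lifted to nonempty lists of regexps (unbounded). -/
inductive RAntimL (I : α → α → Prop) :
    List (RegularExpression α) → α → List (RegularExpression α) → Prop
  | split {Γ Δ : List (RegularExpression α)} {E : RegularExpression α} {a El Er} :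
      RAntim I E a El Er →
      RAntimL I (Γ ++ E :: Δ) a (Γ.map (Rexp I a) ++ El :: Er :: Δ)
  | dropL {Γ Δ : List (RegularExpression α)} {E : RegularExpression α} {a El Er} :
      RAntim I E a El Er → [] ∈ El.matches' → Γ ≠ [] →
      RAntimL I (Γ ++ E :: Δ) a (Γ.map (Rexp I a) ++ Er :: Δ)
  | dropR {Γ Δ : List (RegularExpression α)} {E : RegularExpression α} {a El Er} :
      RAntim I E a El Er → [] ∈ Er.matches' → Δ ≠ [] →
      RAntimL I (Γ ++ E :: Δ) a (Γ.map (Rexp I a) ++ El :: Δ)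
  | dropBoth {Γ Δ : List (RegularExpression α)} {E : RegularExpression α} {a El Er} :
      RAntim I E a El Er → [] ∈ El.matches' → [] ∈ Er.matches' → Γ ≠ [] → Δ ≠ [] →
      RAntimL I (Γ ++ E :: Δ) a (Γ.map (Rexp I a) ++ Δ)

/-- Refined Antimirov relation along a word (unbounded). -/
inductive RAntimW (I : α → α → Prop) :
    RegularExpression α → List α → List (RegularExpression α) → Prop
  | nil (E : RegularExpression α) : RAntimW I E [] [E]
  | snoc {E : RegularExpression α} {u Γ a Γ'} :
      RAntimW I E u Γ → RAntimL I Γ a Γ' → RAntimW I E (u ++ [a]) Γ'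

/-- N-bounded refined Antimirov relation lifted to nonempty lists of regexps. -/
inductive RAntimLN (I : α → α → Prop) (N : ℕ) :
    List (RegularExpression α) → α → List (RegularExpression α) → Prop
  | split {Γ Δ : List (RegularExpression α)} {E : RegularExpression α} {a El Er} :
      RAntim I E a El Er → Γ.length + Δ.length < N →
      RAntimLN I N (Γ ++ E :: Δ) a (Γ.map (Rexp I a) ++ El :: Er :: Δ)
  | dropL {Γ Δ : List (RegularExpression α)} {E : RegularExpression α} {a El Er} :
      RAntim I E a El Er → [] ∈ El.matches' → Γ ≠ [] →
      RAntimLN I N (Γ ++ E :: Δ) a (Γ.map (Rexp I a) ++ Er :: Δ)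
  | dropR {Γ Δ : List (RegularExpression α)} {E : RegularExpression α} {a El Er} :
      RAntim I E a El Er → [] ∈ Er.matches' → Δ ≠ [] →
      RAntimLN I N (Γ ++ E :: Δ) a (Γ.map (Rexp I a) ++ El :: Δ)
  | dropBoth {Γ Δ : List (RegularExpression α)} {E : RegularExpression α} {a El Er} :
      RAntim I E a El Er → [] ∈ El.matches' → [] ∈ Er.matches' → Γ ≠ [] → Δ ≠ [] →
      RAntimLN I N (Γ ++ E :: Δ) a (Γ.map (Rexp I a) ++ Δ)

/-- N-bounded refined Antimirov relation along a word. -/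
inductive RAntimWN (I : α → α → Prop) (N : ℕ) :
    RegularExpression α → List α → List (RegularExpression α) → Prop
  | nil (E : RegularExpression α) : RAntimWN I N E [] [E]
  | snoc {E : RegularExpression α} {u Γ a Γ'} :
      RAntimWN I N E u Γ → RAntimLN I N Γ a Γ' → RAntimWN I N E (u ++ [a]) Γ'

/-!
Both sides agree with one inductive relation `IShuffle`: `z` is built from `u` and `v` letter by
letter, taking either the next letter of `u`, or the next letter `b` of `v` provided `b` is
independent of every letter of `u` still to come. For `rconc` this is its defining recursion. For
a scattering `v₀ u₁ v₁ ⋯ uₙ vₙ`, the first letter of `z` either starts `v₀`, which is independent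
of all of `u`, or (when `v₀ = []`) starts the block `u₁`, which is then shortened or dropped.
-/

inductive IShuffle (I : α → α → Prop) : List α → List α → List α → Prop
  | nil (v : List α) : IShuffle I [] v v
  | cons_left {u z v : List α} (a : α) : IShuffle I u z v → IShuffle I (a :: u) (a :: z) v
  | cons_right {u z v : List α} (b : α) :
      (∀ x ∈ u, I b x) → IShuffle I u z v → IShuffle I u (b :: z) (b :: v)

theorem IShuffle.self_nil {I : α → α → Prop} (u : List α) : IShuffle I u u [] := by
  induction u with
  | nil => exact .nil []
  | cons a u ih => exact .cons_left a ih

section Reordering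

variable {I : α → α → Prop}

theorem rconc_nil_right (u : List α) : rconc I u [] = {u} := by
  cases u <;> simp [rconc]

theorem cons_mem_rconc_cons {u v z : List α} (a : α) (h : z ∈ rconc I u v) :
    a :: z ∈ rconc I (a :: u) v := by
  cases v with
  | nil => simp_all [rconc_nil_right]
  | cons b v => rw [rconc.eq_3]; exact Or.inl ⟨z, h, rfl⟩

theorem mem_rconc_iff_iShuffle (hsym : Symmetric I) {u v z : List α} :
    z ∈ rconc I u v ↔ IShuffle I u z v := by
  constructor
  · induction u, v using rconc.induct generalizing z with
    | case1 v => rw [rconc.eq_1]; rintro rfl; exact .nil _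
    | case2 a u => rw [rconc_nil_right]; rintro rfl; exact .self_nil _
    | case3 a u b v ihu ihv =>
      rw [rconc.eq_3]
      rintro (⟨w, hw, rfl⟩ | ⟨hb, w, hw, rfl⟩)
      · exact .cons_left a (ihu hw)
      · exact .cons_right b (fun x hx => hsym (hb x hx b (List.mem_singleton_self b))) (ihv hw)
  · intro h
    induction h with
    | nil v => rw [rconc.eq_1]; rfl
    | cons_left a _ ih => exact cons_mem_rconc_cons a ih
    | @cons_right u z v b hb _ ih =>
      cases u with
      | nil => simpa [rconc] using ih
      | cons a u =>
        rw [rconc.eq_3]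
        exact Or.inr ⟨fun x hx y hy => (List.mem_singleton.1 hy) ▸ hsym (hb x hx), z, ih, rfl⟩

end Reordering

section Scattering

variable {I : α → α → Prop}

theorem flatten_map_range_succ (f : ℕ → List α) (n : ℕ) :
    ((List.range (n + 1)).map f).flatten = f 0 ++ ((List.range n).map fun i => f (i + 1)).flatten := by
  simp [List.range_succ_eq_map, Function.comp_def]

theorem scat_nil_left (v : List α) : Scat I [] v v :=
  ⟨0, fun _ => [], fun _ => v, fun _ _ _ => by omega, fun _ _ _ => by omega, rfl, by simp, by simp,
    fun _ _ _ _ => by omega⟩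

theorem Scat.cons_right {u z v : List α} {b : α} (hb : ∀ x ∈ u, I b x)
    (h : Scat I u z v) : Scat I u (b :: z) (b :: v) := by
  obtain ⟨n, us, vs, hus, hvs, rfl, rfl, rfl, hind⟩ := h
  refine ⟨n, us, Function.update vs 0 (b :: vs 0), hus, ?_, rfl, ?_, ?_, ?_⟩
  · intro j hj hjn
    rw [Function.update_of_ne (by omega)]
    exact hvs j hj hjn
  · simp [flatten_map_range_succ]
  · simp
  · intro i j hi hin hji
    rcases j with _ | j
    · rw [Function.update_self]
      rintro x (_ | ⟨_, hx⟩) y hy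
      · refine hb y (List.mem_flatten.2 ⟨us i, List.mem_map.2 ⟨i - 1, ?_, ?_⟩, hy⟩)
        · exact List.mem_range.2 (by omega)
        · rw [Nat.sub_add_cancel hi]
      · exact hind i 0 hi hin hji x hx y hy
    · rw [Function.update_of_ne (by omega)]
      exact hind i (j + 1) hi hin hji

theorem Scat.cons_left {u z v : List α} (a : α) (h : Scat I u z v) :
    Scat I (a :: u) (a :: z) v := by
  obtain ⟨n, us, vs, hus, hvs, rfl, rfl, rfl, hind⟩ := h
  -- `a` joins the first block `u₁` if `z` starts with it, otherwise `[a]` is a new first block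
  by_cases hmerge : n ≠ 0 ∧ vs 0 = []
  · obtain ⟨⟨m, rfl⟩, h0⟩ : (∃ m, n = m + 1) ∧ vs 0 = [] :=
      ⟨Nat.exists_eq_succ_of_ne_zero hmerge.1, hmerge.2⟩
    refine ⟨m + 1, Function.update us 1 (a :: us 1), vs, ?_, hvs, ?_, rfl, ?_, ?_⟩
    · intro i hi hin
      rcases eq_or_ne i 1 with rfl | h1
      · simp
      · rw [Function.update_of_ne h1]; exact hus i hi hin
    · simp [flatten_map_range_succ]
    · simp [flatten_map_range_succ, h0]
    · intro i j hi hin hji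
      rcases eq_or_ne i 1 with rfl | h1
      · obtain rfl : j = 0 := by omega
        simp [h0, WIndep]
      · rw [Function.update_of_ne h1]; exact hind i j hi hin hji
  · refine ⟨n + 1, fun i => if i = 1 then [a] else us (i - 1),
      fun j => if j = 0 then [] else vs (j - 1), ?_, ?_, ?_, ?_, ?_, ?_⟩
    · intro i hi hin
      dsimp only
      split_ifs
      · simp
      · exact hus (i - 1) (by omega) (by omega)
    · intro j hj hjn
      dsimp only
      rw [if_neg (by omega)]
      rcases eq_or_ne j 1 with rfl | h1
      · exact fun h0 => hmerge ⟨by omega, h0⟩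
      · exact hvs (j - 1) (by omega) (by omega)
    · simp [flatten_map_range_succ]
    · simp [flatten_map_range_succ]
    · simp [flatten_map_range_succ]
    · intro i j hi hin hji
      rcases Nat.eq_zero_or_pos j with rfl | hj
      · simp [WIndep]
      · dsimp only
        rw [if_neg (by omega), if_neg (by omega)]
        exact hind (i - 1) (j - 1) (by omega) (by omega) (by omega)

theorem Scat.eq_nil_of_nil {u v : List α} (h : Scat I u [] v) : u = [] ∧ v = [] := by
  obtain ⟨n, us, vs, hus, -, rfl, rfl, hz, -⟩ := h
  rcases n with _ | m
  · simp only [List.range_zero, List.map_nil, List.flatten_nil, List.append_nil] at hz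
    simp [hz]
  · simp only [flatten_map_range_succ, List.nil_eq, List.append_eq_nil_iff] at hz
    exact absurd hz.2.1.1 (hus 1 le_rfl (by omega))

theorem scat_of_first_block_eq_cons {m : ℕ} {us vs : ℕ → List α} {c : α} {t : List α}
    (hus : ∀ i, 1 ≤ i → i ≤ m + 1 → us i ≠ []) (hvs : ∀ j, 1 ≤ j → j ≤ m → vs j ≠ [])
    (hind : ∀ i j, 1 ≤ i → i ≤ m + 1 → j < i → WIndep I (vs j) (us i))
    (h0 : vs 0 = []) (h1 : us 1 = c :: t) :
    Scat I (t ++ ((List.range m).map fun i => us (i + 2)).flatten)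
      (t ++ vs 1 ++ ((List.range m).map fun i => us (i + 2) ++ vs (i + 2)).flatten)
      ((List.range (m + 2)).map vs).flatten := by
  rcases eq_or_ne t [] with rfl | ht
  · refine ⟨m, fun i => us (i + 1), fun j => vs (j + 1), ?_, ?_, rfl, ?_, rfl, ?_⟩
    · exact fun i hi hin => hus (i + 1) (by omega) (by omega)
    · exact fun j hj hjm => hvs (j + 1) (by omega) (by omega)
    · rw [flatten_map_range_succ, h0, List.nil_append]
    · exact fun i j hi him hji => hind (i + 1) (j + 1) (by omega) (by omega) (by omega)
  · refine ⟨m + 1, Function.update us 1 t, vs, ?_, hvs, ?_, ?_, ?_, ?_⟩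
    · intro i hi him
      rcases eq_or_ne i 1 with rfl | hi1
      · simpa using ht
      · rw [Function.update_of_ne hi1]; exact hus i hi him
    · simp [flatten_map_range_succ]
    · rfl
    · simp [flatten_map_range_succ, h0]
    · intro i j hi him hji
      rcases eq_or_ne i 1 with rfl | hi1
      · obtain rfl : j = 0 := by omega
        simp [h0, WIndep]
      · rw [Function.update_of_ne hi1]; exact hind i j hi him hji

theorem Scat.cons_inv {u z v : List α} {c : α} (h : Scat I u (c :: z) v) :
    (∃ u', u = c :: u' ∧ Scat I u' z v) ∨
      (∃ v', v = c :: v' ∧ (∀ x ∈ u, I c x) ∧ Scat I u z v') := by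
  obtain ⟨n, us, vs, hus, hvs, rfl, rfl, hz, hind⟩ := h
  rcases n with _ | m
  · right
    simp only [List.range_zero, List.map_nil, List.flatten_nil, List.append_nil] at hz
    simpa [← hz] using scat_nil_left z
  rcases h0 : vs 0 with _ | ⟨b, t⟩
  · left
    obtain ⟨c', t, h1⟩ := List.exists_cons_of_ne_nil (hus 1 le_rfl (by omega))
    rw [flatten_map_range_succ, h0, zero_add, h1] at hz
    simp only [List.nil_append, List.cons_append, List.cons.injEq] at hz
    obtain ⟨rfl, rfl⟩ := hz
    refine ⟨_, by rw [flatten_map_range_succ, zero_add, h1, List.cons_append], ?_⟩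
    simpa [List.append_assoc] using scat_of_first_block_eq_cons hus hvs hind h0 h1
  · right
    rw [h0, List.cons_append, List.cons.injEq] at hz
    obtain ⟨rfl, rfl⟩ := hz
    refine ⟨_, by rw [flatten_map_range_succ, h0, List.cons_append], ?_,
      m + 1, us, Function.update vs 0 t, hus, ?_, rfl, ?_, ?_, ?_⟩
    · intro x hx
      obtain ⟨i, him, hxi⟩ : ∃ i < m + 1, x ∈ us (i + 1) := by simpa using hx
      exact hind (i + 1) 0 (by omega) (by omega) (by omega) c (by simp [h0]) x hxi
    · intro j hj hjm
      rw [Function.update_of_ne (by omega)]; exact hvs j hj hjm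
    · simp [flatten_map_range_succ]
    · simp
    · intro i j hi him hji
      rcases eq_or_ne j 0 with rfl | hj0
      · rw [Function.update_self]
        exact fun x hx => hind i 0 hi him hji x (by simp [h0, hx])
      · rw [Function.update_of_ne hj0]; exact hind i j hi him hji

theorem scat_iff_iShuffle {u z v : List α} : Scat I u z v ↔ IShuffle I u z v := by
  constructor
  · induction z generalizing u v with
    | nil =>
      intro h
      obtain ⟨rfl, rfl⟩ := h.eq_nil_of_nil
      exact .nil []
    | cons c z ih =>
      intro h
      rcases h.cons_inv with ⟨u', rfl, h'⟩ | ⟨v', rfl, hc, h'⟩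
      · exact .cons_left c (ih h')
      · exact .cons_right c hc (ih h')
  · intro h
    induction h with
    | nil v => exact scat_nil_left v
    | cons_left a _ ih => exact ih.cons_left a
    | cons_right b hb _ ih => exact ih.cons_right hb

end Scattering

theorem stmt1_general {α : Type u} (I : α → α → Prop)
    (hsym : Symmetric I) (u v z : List α) :
    z ∈ rconc I u v ↔ Scat I u z v :=
  (mem_rconc_iff_iShuffle hsym).trans scat_iff_iShuffle.symm

/-- z ∈ u ·^I v iff u ⊲ z ⊳ v. -/
theorem stmt1 {α : Type u} [Fintype α] (I : α → α → Prop)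
    (hirr : Irreflexive I) (hsym : Symmetric I) (u v z : List α) :
    z ∈ rconc I u v ↔ Scat I u z v :=
  stmt1_general I hsym u v z
end

section
/- Let Σ = {a, b} with a I b. Then the trace closure of the language of the regular expression (ab)✶ equals {u ∈ Σ* | the number of occurrences of a in u equals the number of occurrences of b in u}, and this language is not regular. Hence there exists a regular language whose trace closure is not regular. -/
open RegularExpression
open scoped Classical

universe u

variable {α : Type u}

/-!
Since the two letters commute, trace equivalence is just permutation, so the trace closure of
`(ab)*` consists of the words with as many `a`s as `b`s. By Myhill–Nerode this language is not
regular: `bⁿ` completes `aᵐ` exactly when `m = n`, so the prefixes `aᵐ` have pairwise distinct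
left quotients. On the other hand `(ab)*` has only the three left quotients `(ab)*`, `b(ab)*`
and `∅`.
-/

open scoped Computability

namespace TrEq

variable {I : α → α → Prop}

theorem perm {u v : List α} (h : TrEq I u v) : u.Perm v := by
  induction h with
  | swap x y _ => exact ((List.Perm.swap _ _ []).append_left x).append_right y
  | refl u => exact List.Perm.refl u
  | symm _ ih => exact ih.symm
  | trans _ _ ih₁ ih₂ => exact ih₁.trans ih₂

theorem cons {u v : List α} (h : TrEq I u v) (c : α) : TrEq I (c :: u) (c :: v) := by
  induction h with
  | swap x y hab => exact swap (c :: x) y hab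
  | refl u => exact refl _
  | symm _ ih => exact ih.symm
  | trans _ _ ih₁ ih₂ => exact ih₁.trans ih₂

theorem of_perm (hI : ∀ x y, x ≠ y → I x y) {u v : List α} (h : u.Perm v) : TrEq I u v := by
  induction h with
  | nil => exact refl []
  | cons c _ ih => exact ih.cons c
  | swap a b l =>
    by_cases hab : a = b
    · subst hab; exact refl _
    · exact swap [] l (hI b a (Ne.symm hab))
  | trans _ _ ih₁ ih₂ => exact ih₁.trans ih₂

end TrEq

theorem mem_trClosure_iff_perm {I : α → α → Prop} (hI : ∀ x y, I x y ↔ x ≠ y)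
    {L : Set (List α)} {w : List α} : w ∈ TrClosure I L ↔ ∃ z ∈ L, w.Perm z :=
  exists_congr fun _ => and_congr_right fun _ =>
    ⟨TrEq.perm, TrEq.of_perm fun x y => (hI x y).2⟩

namespace Language

theorem IsRegular.of_leftQuotient_mem {L : Language α} {S : Set (Language α)} (hS : S.Finite) (hL : L ∈ S)
    (hstep : ∀ X ∈ S, ∀ a, X.leftQuotient [a] ∈ S) : L.IsRegular := by
  refine IsRegular.of_finite_range_leftQuotient (hS.subset ?_)
  rintro _ ⟨w, rfl⟩
  induction w using List.reverseRecOn with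
  | nil => exact hL
  | append_singleton w a ih => rw [leftQuotient_append]; exact hstep _ ih a

theorem leftQuotient_add (X Y : Language α) (w : List α) :
    (X + Y).leftQuotient w = X.leftQuotient w + Y.leftQuotient w := rfl

theorem leftQuotient_zero (w : List α) : (0 : Language α).leftQuotient w = 0 := rfl

theorem leftQuotient_one_singleton (a : α) : (1 : Language α).leftQuotient [a] = 0 := by
  ext w; simp [mem_one]

theorem mem_singleton (x y : List α) : x ∈ ({y} : Language α) ↔ x = y := Iff.rfl

theorem leftQuotient_singleton_mul [DecidableEq α] (X : Language α) (a b : α) :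
    ({[a]} * X).leftQuotient [b] = if b = a then X else 0 := by
  ext w
  simp only [mem_leftQuotient, mem_mul, mem_singleton, exists_eq_left, List.singleton_append,
    List.cons.injEq]
  split_ifs with h
  · simp [h]
  · simp [Ne.symm h, notMem_zero]

theorem isRegular_kstar_singleton_mul_singleton [DecidableEq α] (a b : α) :
    ({[a]} * {[b]} : Language α)∗.IsRegular := by
  generalize hLdef : ({[a]} * {[b]} : Language α)∗ = L
  have hL (c : α) : L.leftQuotient [c] = if c = a then {[b]} * L else 0 := by
    conv_lhs => rw [← hLdef, ← one_add_self_mul_kstar_eq_kstar, mul_assoc, hLdef]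
    rw [leftQuotient_add, leftQuotient_one_singleton, zero_add, leftQuotient_singleton_mul]
  refine IsRegular.of_leftQuotient_mem (S := {L, {[b]} * L, 0}) (by simp) (by simp) ?_
  rintro X (rfl | rfl | rfl) c
  · rw [hL]; split_ifs <;> simp
  · rw [leftQuotient_singleton_mul]; split_ifs <;> simp
  · simp [leftQuotient_zero]

def balanced [DecidableEq α] (a b : α) : Language α := {u | u.count a = u.count b}

theorem not_isRegular_balanced [DecidableEq α] {a b : α} (hab : a ≠ b) :
    ¬ (balanced a b).IsRegular := by
  have hquot (m n : ℕ) :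
      List.replicate n b ∈ (balanced a b).leftQuotient (List.replicate m a) ↔ m = n := by
    change (List.replicate m a ++ List.replicate n b).count a = _ ↔ _
    simp [List.count_replicate, hab, hab.symm]
  have hinj : Function.Injective fun n => (balanced a b).leftQuotient (List.replicate n a) :=
    fun m n (hmn : (balanced a b).leftQuotient _ = _) => (hquot m n).1 (hmn ▸ (hquot n n).2 rfl)
  exact fun h => Set.infinite_range_of_injective hinj <| h.finite_range_leftQuotient.subset <|
    Set.range_subset_iff.2 fun n => Set.mem_range_self _

end Language

theorem count_eq_count_of_mem_kstar_singleton_mul_singleton [DecidableEq α] {a b : α} {z : List α}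
    (hz : z ∈ ({[a]} * {[b]} : Language α)∗) : z.count a = z.count b := by
  obtain ⟨S, rfl, hS⟩ := Language.mem_kstar.1 hz
  have hab : ∀ y ∈ S, y = [a, b] := fun y hy => by
    obtain ⟨_, rfl, _, rfl, rfl⟩ := hS y hy; rfl
  simp only [List.count_flatten]
  congr 1
  refine List.map_congr_left fun y hy => ?_
  rw [hab y hy]
  by_cases h : a = b
  · rw [h]
  · simp [h, Ne.symm h]

theorem trClosure_kstar_eq_balanced {I : Bool → Bool → Prop} (hI : ∀ x y, I x y ↔ x ≠ y) :
    TrClosure I (({[false]} * {[true]} : Language Bool)∗ : Language Bool) =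
      Language.balanced false true := by
  ext u
  refine (mem_trClosure_iff_perm hI).trans ⟨?_, ?_⟩
  · rintro ⟨z, hz, huz⟩
    change u.count false = u.count true
    rw [huz.count_eq, huz.count_eq]
    exact count_eq_count_of_mem_kstar_singleton_mul_singleton hz
  · intro (hu : u.count false = u.count true)
    refine ⟨(List.replicate (u.count true) [false, true]).flatten,
      Language.join_mem_kstar fun y hy => ?_, ?_⟩
    · rw [List.eq_of_mem_replicate hy]; exact ⟨_, rfl, _, rfl, rfl⟩
    · rw [List.perm_iff_count]
      rintro (_ | _) <;> simp [List.count_flatten, hu]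

/-- over Σ = {a, b} with a I b, the trace closure of ⟦(ab)✶⟧ is the
language of words with equally many a's and b's, which is not regular; hence there
is a regular language whose trace closure is not regular. -/
theorem stmt4 (I : Bool → Bool → Prop) (hI : ∀ x y, I x y ↔ x ≠ y)
    (E : RegularExpression Bool)
    (hE : E = RegularExpression.star (comp (char false) (char true))) :
    TrClosure I E.matches' = {u : List Bool | u.count false = u.count true} ∧
    ¬ Language.IsRegular (TrClosure I E.matches' : Language Bool) ∧
    ∃ L : Language Bool, L.IsRegular ∧
      ¬ Language.IsRegular (TrClosure I (L : Set (List Bool)) : Language Bool) := by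
  have hmatches : E.matches' = ({[false]} * {[true]} : Language Bool)∗ := by
    rw [hE, matches'_star, comp_def, matches'_mul, matches'_char, matches'_char]
  have hclosure := trClosure_kstar_eq_balanced hI
  have hnotreg := Language.not_isRegular_balanced Bool.false_ne_true
  rw [hmatches, hclosure]
  exact ⟨rfl, hnotreg, _, Language.isRegular_kstar_singleton_mul_singleton false true,
    hclosure ▸ hnotreg⟩
end
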